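/- arXiv:2102.06246 — 2 statements merged into one kernel-verified Lean document; each statement's English description precedes it below -/
import Mathlib

section
/- For every payoff function V : A × A⁺ → ℝ with V(a,∅) = 0 for all agents a, the set S(V) of stable matchings is nonempty, i.e., there exists a feasible matching M ∈ W that is stable under V. -/
namespace MatchingBandits

/-- The agents: users `Sum.inl u` (`u : Fin N`) on one side and providers `Sum.inr p`
(`p : Fin L`) on the other.  `Option (Agent N L)` plays the role of `A⁺ = A ∪ {∅}`,
with `none` denoting being unmatched. -/
abbrev Agent (N L : ℕ) := Sum (Fin N) (Fin L)

/-- A feasible matching: each user is matched to at most one provider, each provider is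
matched to exactly one user, matches are mutual, and unmatched agents are assigned `none`. -/
structure Matching (N L : ℕ) where
  (toFun : Agent N L → Option (Agent N L))
  (user_matches_provider : ∀ (u : Fin N) (a : Agent N L),
    toFun (Sum.inl u) = some a → ∃ p : Fin L, a = Sum.inr p)
  (provider_matched : ∀ p : Fin L, ∃ u : Fin N, toFun (Sum.inr p) = some (Sum.inl u))
  (mutual_match : ∀ a a' : Agent N L, toFun a = some a' ↔ toFun a' = some a)

/-- A matching `M` is stable under the payoff function `V` (with `V a none = 0`) if there
is no user–provider pair `(u, p)` such that both strictly prefer each other to their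
assignments under `M`. -/
def IsStable {N L : ℕ} (V : Agent N L → Option (Agent N L) → ℝ)
    (M : Matching N L) : Prop :=
  ¬ ∃ (u : Fin N) (p : Fin L),
      V (Sum.inl u) (M.toFun (Sum.inl u)) < V (Sum.inl u) (some (Sum.inr p)) ∧
      V (Sum.inr p) (M.toFun (Sum.inr p)) < V (Sum.inr p) (some (Sum.inl u))

section GS

variable {N L : ℕ} (V : Agent N L → Option (Agent N L) → ℝ)

/-- user `u`'s tie-broken preference value for provider `p` -/
noncomputable def up (u : Fin N) (p : Fin L) : ℝ ×ₗ ℕ :=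
  toLex (V (Sum.inl u) (some (Sum.inr p)), (p : ℕ))

/-- provider `p`'s tie-broken preference value for user `u` -/
noncomputable def pp (p : Fin L) (u : Fin N) : ℝ ×ₗ ℕ :=
  toLex (V (Sum.inr p) (some (Sum.inl u)), (u : ℕ))

lemma up_lt_of_V {u : Fin N} {p q : Fin L}
    (h : V (Sum.inl u) (some (Sum.inr p)) < V (Sum.inl u) (some (Sum.inr q))) :
    up V u p < up V u q := by
  rw [up, up, Prod.Lex.lt_iff]; exact Or.inl h

lemma V_le_of_up {u : Fin N} {p q : Fin L} (h : up V u p < up V u q) :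
    V (Sum.inl u) (some (Sum.inr p)) ≤ V (Sum.inl u) (some (Sum.inr q)) := by
  rw [up, up, Prod.Lex.lt_iff] at h
  rcases h with h | ⟨h, _⟩
  · exact le_of_lt h
  · exact le_of_eq h

lemma pp_lt_of_V {p : Fin L} {u w : Fin N}
    (h : V (Sum.inr p) (some (Sum.inl u)) < V (Sum.inr p) (some (Sum.inl w))) :
    pp V p u < pp V p w := by
  rw [pp, pp, Prod.Lex.lt_iff]; exact Or.inl h

lemma up_injective (u : Fin N) {p q : Fin L} (h : up V u p = up V u q) : p = q := by
  rw [up, up] at h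
  have := congrArg (fun x => (ofLex x).2) h
  simpa [Fin.val_injective.eq_iff, Fin.val_eq_val] using this

/-- A Gale–Shapley state: a partial matching `m` of providers to users, plus
rejection sets `R p` (users who rejected provider `p`), with the invariants. -/
structure St where
  m : Fin L → Option (Fin N)
  R : Fin L → Finset (Fin N)
  inj : ∀ p q u, m p = some u → m q = some u → p = q
  I1 : ∀ p u, u ∈ R p → ∃ q, m q = some u ∧ up V u p < up V u q
  I2a : ∀ p u, m p = some u → u ∉ R p
  I2b : ∀ p u u', m p = some u → pp V p u < pp V p u' → u' ∈ R p

noncomputable def μ (s : St V) : ℕ :=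
  (∑ p, (s.R p).card) + (Finset.univ.filter (fun p => (s.m p).isSome)).card

def Complete (s : St V) : Prop := ∀ p, (s.m p).isSome

lemma step (hNL : L ≤ N) (s : St V) (h : ¬ Complete V s) :
    ∃ s' : St V, μ V s < μ V s' := by
  classical
  obtain ⟨p, hp'⟩ := not_forall.mp h
  have hp : s.m p = none := Option.not_isSome_iff_eq_none.mp hp'
  -- the set of users that have not rejected p is nonempty
  have hcand : (Finset.univ \ s.R p).Nonempty := by
    by_contra hcon
    rw [Finset.not_nonempty_iff_eq_empty, Finset.sdiff_eq_empty_iff_subset] at hcon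
    have hall : ∀ u : Fin N, u ∈ s.R p := fun u => hcon (Finset.mem_univ u)
    choose g hg _ using fun u => s.I1 p u (hall u)
    have ginj : Function.Injective g := by
      intro a b hab
      have h1 := hg a
      rw [hab] at h1
      exact Option.some.inj (h1.symm.trans (hg b))
    have gne : ∀ u, g u ≠ p := by
      intro u hne
      have := hg u
      rw [hne, hp] at this
      exact absurd this (by simp)
    have hcard : (Finset.univ : Finset (Fin N)).card ≤
        ((Finset.univ : Finset (Fin L)).erase p).card := by
      refine Finset.card_le_card_of_injOn g
        (fun a _ => Finset.mem_erase.mpr ⟨gne a, Finset.mem_univ _⟩) ?_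
      intro a _ b _ hab
      exact ginj hab
    rw [Finset.card_univ, Finset.card_erase_of_mem (Finset.mem_univ p)] at hcard
    simp only [Finset.card_univ, Fintype.card_fin] at hcard
    have := p.pos
    omega
  obtain ⟨u, hu, hmax⟩ := Finset.exists_max_image _ (pp V p) hcand
  have huR : u ∉ s.R p := (Finset.mem_sdiff.mp hu).2
  have hmax' : ∀ w : Fin N, pp V p u < pp V p w → w ∈ s.R p := by
    intro w hw
    by_contra hc
    exact absurd hw (not_lt.mpr (hmax w (Finset.mem_sdiff.mpr ⟨Finset.mem_univ _, hc⟩)))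
  by_cases hq : ∃ q, s.m q = some u
  · -- user u is currently matched to some provider q
    obtain ⟨q, hq⟩ := hq
    have hqp : q ≠ p := by
      intro e; rw [e, hp] at hq; exact absurd hq (by simp)
    have hpq : p ≠ q := fun e => hqp e.symm
    rcases lt_trichotomy (up V u p) (up V u q) with hlt | heq | hgt
    · -- u prefers its current match: u rejects p
      refine ⟨⟨s.m, Function.update s.R p (insert u (s.R p)), s.inj, ?_, ?_, ?_⟩, ?_⟩
      · intro r w hw
        by_cases hr : r = p
        · subst hr
          rw [Function.update_self] at hw
          rcases Finset.mem_insert.mp hw with e | hw'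
          · subst e; exact ⟨q, hq, hlt⟩
          · exact s.I1 r w hw'
        · rw [Function.update_of_ne hr] at hw
          exact s.I1 r w hw
      · intro r w hrw
        by_cases hr : r = p
        · subst hr; rw [hp] at hrw; exact absurd hrw (by simp)
        · rw [Function.update_of_ne hr]; exact s.I2a r w hrw
      · intro r w w' hrw hlt'
        by_cases hr : r = p
        · subst hr; rw [hp] at hrw; exact absurd hrw (by simp)
        · rw [Function.update_of_ne hr]; exact s.I2b r w w' hrw hlt'
      · simp only [μ]
        have hkey : (fun r => ((Function.update s.R p (insert u (s.R p))) r).card)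
            = Function.update (fun r => (s.R r).card) p ((insert u (s.R p)).card) := by
          ext r
          by_cases hr : r = p
          · subst hr; simp
          · simp [Function.update_of_ne hr]
        have hsum : ∑ r, ((Function.update s.R p (insert u (s.R p))) r).card
            = (insert u (s.R p)).card + ∑ r ∈ Finset.univ \ {p}, (s.R r).card := by
          rw [hkey]
          exact Finset.sum_update_of_mem (Finset.mem_univ p) _ _
        have hsum2 : ∑ r, (s.R r).card
            = (s.R p).card + ∑ r ∈ Finset.univ \ {p}, (s.R r).card := by
          rw [add_comm]
          exact (Finset.sum_eq_sum_sdiff_singleton_add (Finset.mem_univ p) _)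
        rw [hsum, hsum2, Finset.card_insert_of_notMem huR]
        omega
    · exact absurd (up_injective V u heq) hpq
    · -- u prefers p: u switches from q to p, rejecting q
      have huRq : u ∉ s.R q := s.I2a q u hq
      set m' : Fin L → Option (Fin N) :=
        Function.update (Function.update s.m q none) p (some u) with hm'
      have hm'p : m' p = some u := Function.update_self _ _ _
      have hm'q : m' q = none := by
        rw [hm', Function.update_of_ne hqp, Function.update_self]
      have hm'o : ∀ r, r ≠ p → r ≠ q → m' r = s.m r := by
        intro r h1 h2
        rw [hm', Function.update_of_ne h1, Function.update_of_ne h2]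
      refine ⟨⟨m', Function.update s.R q (insert u (s.R q)), ?_, ?_, ?_, ?_⟩, ?_⟩
      · -- injectivity
        intro a b w ha hb
        by_cases hap : a = p <;> by_cases hbp : b = p
        · rw [hap, hbp]
        · exfalso
          subst hap
          have hwu : w = u := (Option.some.inj ((hm'p).symm.trans ha)).symm
          subst hwu
          have hbq : b ≠ q := by
            intro e; rw [e, hm'q] at hb; exact absurd hb (by simp)
          rw [hm'o b hbp hbq] at hb
          exact hbq (s.inj b q w hb hq)
        · exfalso
          subst hbp
          have hwu : w = u := (Option.some.inj ((hm'p).symm.trans hb)).symm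
          subst hwu
          have haq : a ≠ q := by
            intro e; rw [e, hm'q] at ha; exact absurd ha (by simp)
          rw [hm'o a hap haq] at ha
          exact haq (s.inj a q w ha hq)
        · have haq : a ≠ q := by
            intro e; rw [e, hm'q] at ha; exact absurd ha (by simp)
          have hbq : b ≠ q := by
            intro e; rw [e, hm'q] at hb; exact absurd hb (by simp)
          rw [hm'o a hap haq] at ha
          rw [hm'o b hbp hbq] at hb
          exact s.inj a b w ha hb
      · -- I1
        intro r w hw
        by_cases hr : r = q
        · subst hr
          rw [Function.update_self] at hw
          rcases Finset.mem_insert.mp hw with e | hw'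
          · subst e; exact ⟨p, hm'p, hgt⟩
          · obtain ⟨q0, hq0, hlt0⟩ := s.I1 r w hw'
            by_cases hq0q : q0 = r
            · subst hq0q
              have hwu : w = u := Option.some.inj (hq0.symm.trans hq)
              subst hwu
              exact absurd hw' huRq
            · have hq0p : q0 ≠ p := by
                intro e; rw [e, hp] at hq0; exact absurd hq0 (by simp)
              exact ⟨q0, by rw [hm'o q0 hq0p hq0q]; exact hq0, hlt0⟩
        · rw [Function.update_of_ne hr] at hw
          obtain ⟨q0, hq0, hlt0⟩ := s.I1 r w hw
          by_cases hq0q : q0 = q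
          · subst hq0q
            have hwu : w = u := Option.some.inj (hq0.symm.trans hq)
            subst hwu
            exact ⟨p, hm'p, lt_trans hlt0 hgt⟩
          · have hq0p : q0 ≠ p := by
              intro e; rw [e, hp] at hq0; exact absurd hq0 (by simp)
            exact ⟨q0, by rw [hm'o q0 hq0p hq0q]; exact hq0, hlt0⟩
      · -- I2a
        intro r w hrw
        by_cases hr : r = p
        · subst hr
          have hwu : w = u := (Option.some.inj ((hm'p).symm.trans hrw)).symm
          subst hwu
          rw [Function.update_of_ne hpq]
          exact huR
        · by_cases hr2 : r = q
          · subst hr2; rw [hm'q] at hrw; exact absurd hrw (by simp)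
          · rw [hm'o r hr hr2] at hrw
            rw [Function.update_of_ne hr2]
            exact s.I2a r w hrw
      · -- I2b
        intro r w w' hrw hlt'
        by_cases hr : r = p
        · subst hr
          have hwu : w = u := (Option.some.inj ((hm'p).symm.trans hrw)).symm
          subst hwu
          rw [Function.update_of_ne hpq]
          exact hmax' w' hlt'
        · by_cases hr2 : r = q
          · subst hr2; rw [hm'q] at hrw; exact absurd hrw (by simp)
          · rw [hm'o r hr hr2] at hrw
            rw [Function.update_of_ne hr2]
            exact s.I2b r w w' hrw hlt'
      · -- measure increases
        simp only [μ]
        have hkey : (fun r => ((Function.update s.R q (insert u (s.R q))) r).card)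
            = Function.update (fun r => (s.R r).card) q ((insert u (s.R q)).card) := by
          ext r
          by_cases hr : r = q
          · subst hr; simp
          · simp [Function.update_of_ne hr]
        have hsum : ∑ r, ((Function.update s.R q (insert u (s.R q))) r).card
            = (insert u (s.R q)).card + ∑ r ∈ Finset.univ \ {q}, (s.R r).card := by
          rw [hkey]
          exact Finset.sum_update_of_mem (Finset.mem_univ q) _ _
        have hsum2 : ∑ r, (s.R r).card
            = (s.R q).card + ∑ r ∈ Finset.univ \ {q}, (s.R r).card := by
          rw [add_comm]
          exact (Finset.sum_eq_sum_sdiff_singleton_add (Finset.mem_univ q) _)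
        have hfe : Finset.univ.filter (fun r => (m' r).isSome)
            = insert p ((Finset.univ.filter (fun r => (s.m r).isSome)).erase q) := by
          ext r
          simp only [Finset.mem_filter, Finset.mem_insert, Finset.mem_erase,
            Finset.mem_univ, true_and]
          by_cases hr : r = p
          · subst hr; simp [hm'p]
          · by_cases hr2 : r = q
            · subst hr2; simp [hm'q, hqp, hr]
            · simp [hm'o r hr hr2, hr, hr2]
        have hqmem : q ∈ Finset.univ.filter (fun r => (s.m r).isSome) := by
          simp [hq]
        have hpmem : p ∉ (Finset.univ.filter (fun r => (s.m r).isSome)).erase q := by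
          simp [hp]
        have hpos : 0 < (Finset.univ.filter (fun r => (s.m r).isSome)).card :=
          Finset.card_pos.mpr ⟨q, hqmem⟩
        rw [hsum, hsum2, Finset.card_insert_of_notMem huRq, hfe,
          Finset.card_insert_of_notMem hpmem, Finset.card_erase_of_mem hqmem]
        omega
  · -- user u is unmatched: p and u become matched, no rejection
    push_neg at hq
    refine ⟨⟨Function.update s.m p (some u), s.R, ?_, ?_, ?_, ?_⟩, ?_⟩
    · intro a b w ha hb
      by_cases hap : a = p <;> by_cases hbp : b = p
      · rw [hap, hbp]
      · exfalso
        subst hap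
        rw [Function.update_self] at ha
        have hwu : w = u := (Option.some.inj ha).symm
        rw [Function.update_of_ne hbp] at hb
        exact hq b (hwu ▸ hb)
      · exfalso
        subst hbp
        rw [Function.update_self] at hb
        have hwu : w = u := (Option.some.inj hb).symm
        rw [Function.update_of_ne hap] at ha
        exact hq a (hwu ▸ ha)
      · rw [Function.update_of_ne hap] at ha
        rw [Function.update_of_ne hbp] at hb
        exact s.inj a b w ha hb
    · intro r w hw
      obtain ⟨q0, hq0, hlt0⟩ := s.I1 r w hw
      have hq0p : q0 ≠ p := by
        intro e; rw [e, hp] at hq0; exact absurd hq0 (by simp)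
      exact ⟨q0, by rw [Function.update_of_ne hq0p]; exact hq0, hlt0⟩
    · intro r w hrw
      by_cases hr : r = p
      · subst hr
        rw [Function.update_self] at hrw
        have hwu : w = u := (Option.some.inj hrw).symm
        subst hwu
        exact huR
      · rw [Function.update_of_ne hr] at hrw
        exact s.I2a r w hrw
    · intro r w w' hrw hlt'
      by_cases hr : r = p
      · subst hr
        rw [Function.update_self] at hrw
        have hwu : w = u := (Option.some.inj hrw).symm
        subst hwu
        exact hmax' w' hlt'
      · rw [Function.update_of_ne hr] at hrw
        exact s.I2b r w w' hrw hlt'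
    · simp only [μ]
      have hfe : Finset.univ.filter (fun r => ((Function.update s.m p (some u)) r).isSome)
          = insert p (Finset.univ.filter (fun r => (s.m r).isSome)) := by
        ext r
        simp only [Finset.mem_filter, Finset.mem_insert, Finset.mem_univ, true_and]
        by_cases hr : r = p
        · subst hr; simp
        · simp [Function.update_of_ne hr, hr]
      have hpmem : p ∉ Finset.univ.filter (fun r => (s.m r).isSome) := by
        simp [hp]
      rw [hfe, Finset.card_insert_of_notMem hpmem]
      omega

lemma μ_lt_of_not_complete (s : St V) (h : ¬ Complete V s) : μ V s < L * N + L := by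
  obtain ⟨p, hp⟩ := not_forall.mp h
  have h1 : (∑ p, (s.R p).card) ≤ L * N := by
    calc (∑ p, (s.R p).card) ≤ ∑ _p : Fin L, N :=
          Finset.sum_le_sum (fun q _ => (s.R q).card_le_univ.trans_eq (by simp))
      _ = L * N := by simp [Finset.sum_const, mul_comm]
  have h2 : (Finset.univ.filter (fun p => (s.m p).isSome)).card < L := by
    have hss : (Finset.univ.filter (fun p => (s.m p).isSome)) ⊂ Finset.univ := by
      refine Finset.ssubset_univ_iff.mpr ?_
      intro hcon
      have : p ∈ Finset.univ.filter (fun p => (s.m p).isSome) := by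
        rw [hcon]; exact Finset.mem_univ p
      exact hp (Finset.mem_filter.mp this).2
    simpa using Finset.card_lt_card hss
  rw [μ]; omega

lemma exists_complete_aux (hNL : L ≤ N) :
    ∀ k : ℕ, ∀ s : St V, L * N + L ≤ μ V s + k → ∃ s' : St V, Complete V s' := by
  intro k
  induction k with
  | zero =>
    intro s hs
    by_cases hc : Complete V s
    · exact ⟨s, hc⟩
    · exact absurd hs (by have := μ_lt_of_not_complete V s hc; omega)
  | succ k ih =>
    intro s hs
    by_cases hc : Complete V s
    · exact ⟨s, hc⟩
    · obtain ⟨s', hs'⟩ := step V hNL s hc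
      exact ih s' (by omega)

lemma exists_complete (hNL : L ≤ N) : ∃ s : St V, Complete V s := by
  refine exists_complete_aux V hNL (L * N + L)
    ⟨(fun _ => none), (fun _ => ∅), ?_, ?_, ?_, ?_⟩ (by simp [μ])
  · intro p q u hp; simp at hp
  · intro p u hu; simp at hu
  · intro p u hp; simp at hp
  · intro p u u' hp; simp at hp

theorem exists_stable (hNL : L ≤ N) : ∃ M : Matching N L, IsStable V M := by
  classical
  obtain ⟨s, hs⟩ := exists_complete V hNL
  -- extract the total matching function
  have hf : ∀ p : Fin L, ∃ u, s.m p = some u := fun p => Option.isSome_iff_exists.mp (hs p)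
  choose f hfm using hf
  have hfinj : Function.Injective f := by
    intro p q hpq
    exact s.inj p q (f p) (hfm p) (hpq ▸ hfm q)
  refine ⟨⟨fun a => match a with
    | Sum.inr p => some (Sum.inl (f p))
    | Sum.inl u => if h : ∃ p, f p = u then some (Sum.inr h.choose) else none,
    ?_, ?_, ?_⟩, ?_⟩
  · intro u a ha
    simp only at ha
    split at ha
    · exact ⟨_, (Option.some.inj ha).symm⟩
    · exact absurd ha (by simp)
  · intro p; exact ⟨f p, rfl⟩
  · intro a a'
    match a, a' with
    | Sum.inl u, Sum.inl u' =>
      constructor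
      · intro h; dsimp only at h ⊢; split at h
        · exact absurd (Option.some.inj h) (by simp)
        · exact absurd h (by simp)
      · intro h; dsimp only at h ⊢; split at h
        · exact absurd (Option.some.inj h) (by simp)
        · exact absurd h (by simp)
    | Sum.inr p, Sum.inr p' => simp
    | Sum.inl u, Sum.inr p =>
      constructor
      · intro h
        dsimp only at h ⊢
        split at h
        case isTrue hex =>
          have h1 : hex.choose = p := Sum.inr.inj (Option.some.inj h)
          rw [← h1, hex.choose_spec]
        case isFalse => exact absurd h (by simp)
      · intro h
        dsimp only at h ⊢
        have h1 : f p = u := Sum.inl.inj (Option.some.inj h)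
        have hex : ∃ q, f q = u := ⟨p, h1⟩
        simp only [dif_pos hex]
        have : hex.choose = p := hfinj (hex.choose_spec.trans h1.symm)
        rw [this]
    | Sum.inr p, Sum.inl u =>
      constructor
      · intro h
        dsimp only at h ⊢
        have h1 : f p = u := Sum.inl.inj (Option.some.inj h)
        have hex : ∃ q, f q = u := ⟨p, h1⟩
        simp only [dif_pos hex]
        have : hex.choose = p := hfinj (hex.choose_spec.trans h1.symm)
        rw [this]
      · intro h
        dsimp only at h ⊢
        split at h
        case isTrue hex =>
          have h1 : hex.choose = p := Sum.inr.inj (Option.some.inj h)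
          rw [← h1, hex.choose_spec]
        case isFalse => exact absurd h (by simp)
  · -- stability
    rintro ⟨u, p, hu, hp⟩
    simp only at hu hp
    -- p strictly prefers u to its current partner f p
    have hppu : pp V p (f p) < pp V p u := pp_lt_of_V V hp
    have hR : u ∈ s.R p := s.I2b p (f p) u (hfm p) hppu
    obtain ⟨q, hq, huq⟩ := s.I1 p u hR
    have hfq : f q = u := Option.some.inj ((hfm q).symm.trans hq)
    have hex : ∃ r, f r = u := ⟨q, hfq⟩
    rw [dif_pos hex] at hu
    have hcq : hex.choose = q := hfinj (hex.choose_spec.trans hfq.symm)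
    rw [hcq] at hu
    exact absurd (V_le_of_up V huq) (not_le.mpr hu)

end GS

/-- For every payoff function `V : A × A⁺ → ℝ` with `V(a,∅) = 0` for all
agents `a`, the set `S(V)` of stable matchings is nonempty: there exists a feasible
matching that is stable under `V`. -/
theorem exists_stable_matching (N L : ℕ) (hL : 1 ≤ L) (hNL : L ≤ N)
    (V : Agent N L → Option (Agent N L) → ℝ) (hV0 : ∀ a, V a none = 0) :
    ∃ M : Matching N L, IsStable V M := by
  exact exists_stable V hNL

end MatchingBandits
end

section
/- There exist a two-sided market, a payoff function V : A × A⁺ → ℝ, and a matching M that is stable under V, such that the social welfare of M is less than half the maximum achievable social welfare over feasible matchings: Σ_{a ∈ A} V(a,M(a)) < (1/2)·max_{M' ∈ W} Σ_{a ∈ A} V(a,M'(a)). Hence stability does not guarantee high social welfare. -/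
namespace MatchingBandits

def Mfun : Agent 2 1 → Option (Agent 2 1)
  | Sum.inl 0 => some (Sum.inr 0)
  | Sum.inl 1 => none
  | Sum.inr 0 => some (Sum.inl 0)

def Mfun' : Agent 2 1 → Option (Agent 2 1)
  | Sum.inl 0 => none
  | Sum.inl 1 => some (Sum.inr 0)
  | Sum.inr 0 => some (Sum.inl 1)

def Vex : Agent 2 1 → Option (Agent 2 1) → ℝ
  | Sum.inl 0, some (Sum.inr 0) => 1
  | Sum.inr 0, some (Sum.inl 0) => 1
  | Sum.inl 1, some (Sum.inr 0) => 10
  | _, _ => 0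

def Mex : Matching 2 1 where
  toFun := Mfun
  user_matches_provider := by decide
  provider_matched := by decide
  mutual_match := by decide

def Mex' : Matching 2 1 where
  toFun := Mfun'
  user_matches_provider := by decide
  provider_matched := by decide
  mutual_match := by decide

/-- There exist a two-sided market, a payoff function `V : A × A⁺ → ℝ`
(with `V(a,∅) = 0`) and a matching `M` stable under `V` whose social welfare is less than
half of the maximum achievable social welfare over feasible matchings (so stability does
not guarantee high social welfare).  (Having welfare `< (1/2) · max_{M' ∈ W} welfare(M')`
is expressed by exhibiting a feasible matching `M'` with
`welfare(M) < (1/2) · welfare(M')`.) -/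
theorem stability_does_not_imply_high_social_welfare :
    ∃ (N L : ℕ), 1 ≤ L ∧ L ≤ N ∧
    ∃ V : Agent N L → Option (Agent N L) → ℝ, (∀ a, V a none = 0) ∧
    ∃ M : Matching N L, IsStable V M ∧
    ∃ M' : Matching N L,
      (∑ a : Agent N L, V a (M.toFun a))
        < (1 / 2 : ℝ) * ∑ a : Agent N L, V a (M'.toFun a) := by
  refine ⟨2, 1, le_refl 1, by norm_num, Vex, ?_, Mex, ?_, Mex', ?_⟩
  · intro a; rcases a with u | p
    · fin_cases u <;> rfl
    · fin_cases p <;> rfl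
  · rintro ⟨u, p, h1, h2⟩
    fin_cases u <;> fin_cases p <;> simp [Mex, Mfun, Vex] at h1 h2 <;> norm_num at h1 h2
  · simp [Mex, Mex', Fintype.sum_sum_type, Fin.sum_univ_succ, Mfun, Mfun', Vex]
    norm_num


end MatchingBandits
end
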